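/- The maximum over all indices i with N/2+1 ≤ i ≤ N of Θ_i is bounded by 2·max{σ/α, 1}·N^{−1}·sup_{t ∈ [0,1/2]} |ψ′(t)|. -/

import Mathlib

/-!
With `a = 1 - t_i` and `b = 1 - t_{i-1}`, the quantity `Θ_i` is `min (κ x) 1 · e^{-φ a}` where
`κ = σ/α` and `x = φ b - φ a ≥ 0`. Since `min x 1 ≤ 2 (1 - e^{-x})`, this is at most
`2 max κ 1 · (ψ a - ψ b)`, and the mean value inequality bounds `ψ a - ψ b` by
`sup |ψ'| · (b - a) = sup |ψ'| / N`.
-/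

open Real Set

lemma min_mul_le_max_mul_min {κ x : ℝ} (hx : 0 ≤ x) : min (κ * x) 1 ≤ max κ 1 * min x 1 := by
  rcases le_total x 1 with h | h
  · rw [min_eq_left h]
    exact (min_le_left _ _).trans (mul_le_mul_of_nonneg_right (le_max_left _ _) hx)
  · rw [min_eq_right h, mul_one]
    exact (min_le_right _ _).trans (le_max_right _ _)

lemma min_le_two_mul_one_sub_exp_neg {x : ℝ} (hx : 0 ≤ x) : min x 1 ≤ 2 * (1 - exp (-x)) := by
  have h_exp : (1 + x) * exp (-x) ≤ 1 := by
    calc (1 + x) * exp (-x) ≤ exp x * exp (-x) := by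
          gcongr; linarith [add_one_le_exp x]
      _ = 1 := by rw [← exp_add, add_neg_cancel, exp_zero]
  have h_pos : 0 ≤ 1 - exp (-x) := by
    rw [sub_nonneg]; exact exp_le_one_iff.mpr (neg_nonpos.mpr hx)
  rcases le_total x 1 with h | h
  · rw [min_eq_left h]; nlinarith
  · rw [min_eq_right h]; nlinarith

lemma min_mul_mul_exp_neg_le (κ : ℝ) {x : ℝ} (hx : 0 ≤ x) (y : ℝ) :
    min (κ * x) 1 * exp (-y) ≤ 2 * max κ 1 * (exp (-y) - exp (-(y + x))) := by
  have hκ : 0 ≤ max κ 1 := zero_le_one.trans (le_max_right _ _)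
  calc min (κ * x) 1 * exp (-y) ≤ max κ 1 * min x 1 * exp (-y) := by
        gcongr; exact min_mul_le_max_mul_min hx
    _ ≤ max κ 1 * (2 * (1 - exp (-x))) * exp (-y) := by
        gcongr; exact min_le_two_mul_one_sub_exp_neg hx
    _ = 2 * max κ 1 * (exp (-y) - exp (-(y + x))) := by
        rw [neg_add, exp_add]; ring

lemma sub_le_mul_of_abs_deriv_le {f : ℝ → ℝ} {a b M : ℝ} (hab : a ≤ b)
    (hf : ∀ t ∈ Icc a b, DifferentiableAt ℝ f t) (hM : ∀ t ∈ Icc a b, |deriv f t| ≤ M) :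
    f a - f b ≤ M * (b - a) := by
  have h := norm_image_sub_le_of_norm_deriv_le_segment'
    (fun t ht => (hf t ht).hasDerivAt.hasDerivWithinAt) (fun t ht => hM t (Ico_subset_Icc_self ht))
    b (right_mem_Icc.mpr hab)
  rw [Real.norm_eq_abs, abs_sub_comm] at h
  exact (le_abs_self _).trans h

lemma grid_step_mem_Icc {N i : ℕ} (hN : Even N) (hi : N / 2 + 1 ≤ i) (hiN : i ≤ N) :
    0 ≤ 1 - (i : ℝ) / N ∧ 1 - ((i : ℝ) - 1) / N ≤ 1 / 2 := by
  obtain ⟨m, rfl⟩ := hN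
  have hm : (m : ℝ) + 1 ≤ i := by exact_mod_cast (by omega : m + 1 ≤ i)
  have hiN' : (i : ℝ) ≤ m + m := by exact_mod_cast hiN
  have hpos : (0 : ℝ) < m + m := by linarith [(Nat.cast_nonneg m : (0 : ℝ) ≤ m)]
  push_cast
  constructor
  · rw [sub_nonneg, div_le_one hpos]; exact hiN'
  · rw [sub_le_comm, le_div_iff₀ hpos]; linarith

theorem theta_max_bound_general
    (α σ ε : ℝ) (hε : 0 < ε)
    (N : ℕ) (hNeven : Even N)
    (φ φ' : ℝ → ℝ)
    (hφderiv : ∀ t ∈ Set.Icc (0:ℝ) (1/2), HasDerivAt φ (φ' t) t)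
    (hφ'cont : ContinuousOn φ' (Set.Icc (0:ℝ) (1/2)))
    (hφ'pos : ∀ t ∈ Set.Icc (0:ℝ) (1/2), 0 < φ' t)
    (ψ : ℝ → ℝ) (hψ : ∀ t, ψ t = Real.exp (-φ t)) :
    ∀ i : ℕ, N / 2 + 1 ≤ i → i ≤ N →
      min ((σ * ε / α) * (φ (1 - ((i:ℝ) - 1) / N) - φ (1 - (i:ℝ) / N)) / ε) 1
          * ψ (1 - (i:ℝ) / N)
        ≤ 2 * max (σ / α) 1 * (1 / N)
            * sSup ((fun t => |deriv ψ t|) '' Set.Icc (0:ℝ) (1/2)) := by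
  intro i hi hiN
  set I := Icc (0 : ℝ) (1 / 2)
  set a := 1 - (i : ℝ) / N
  set b := 1 - ((i : ℝ) - 1) / N
  set M := sSup ((fun t => |deriv ψ t|) '' I)
  obtain ⟨ha, hb⟩ := grid_step_mem_Icc hNeven hi hiN
  have hN : (0 : ℝ) < N := by exact_mod_cast (by omega : 0 < N)
  have hba : b - a = 1 / N := by simp only [a, b]; field_simp; ring
  have hab : a ≤ b := by linarith [one_div_pos.mpr hN]
  have hψderiv : ∀ t ∈ I, HasDerivAt ψ (exp (-φ t) * -φ' t) t := by
    rw [funext hψ]; exact fun t ht => (hφderiv t ht).neg.exp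
  have hψ'cont : ContinuousOn (deriv ψ) I :=
    ((continuous_exp.comp_continuousOn
      (HasDerivAt.continuousOn hφderiv).neg).mul hφ'cont.neg).congr fun t ht => (hψderiv t ht).deriv
  have hM : ∀ t ∈ I, |deriv ψ t| ≤ M := fun t ht =>
    le_csSup (isCompact_Icc.bddAbove_image hψ'cont.abs) (mem_image_of_mem _ ht)
  have hφmono : MonotoneOn φ I := monotoneOn_of_hasDerivWithinAt_nonneg (convex_Icc 0 (1 / 2))
    (HasDerivAt.continuousOn hφderiv)
    (fun t ht => (hφderiv t (interior_subset ht)).hasDerivWithinAt)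
    (fun t ht => (hφ'pos t (interior_subset ht)).le)
  have hsub : Icc a b ⊆ I := Icc_subset_Icc ha hb
  calc min ((σ * ε / α) * (φ b - φ a) / ε) 1 * ψ a
      = min ((σ / α) * (φ b - φ a)) 1 * exp (-φ a) := by rw [hψ]; field_simp
    _ ≤ 2 * max (σ / α) 1 * (exp (-φ a) - exp (-(φ a + (φ b - φ a)))) :=
        min_mul_mul_exp_neg_le _ (sub_nonneg.mpr
          (hφmono (hsub (left_mem_Icc.mpr hab)) (hsub (right_mem_Icc.mpr hab)) hab)) _
    _ = 2 * max (σ / α) 1 * (ψ a - ψ b) := by rw [add_sub_cancel, hψ, hψ]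
    _ ≤ 2 * max (σ / α) 1 * (M * (b - a)) := by
        gcongr
        exact sub_le_mul_of_abs_deriv_le hab
          (fun t ht => (hψderiv t (hsub ht)).differentiableAt) (fun t ht => hM t (hsub ht))
    _ = 2 * max (σ / α) 1 * (1 / N) * M := by rw [hba]; ring

/-- The maximum over all indices `i` with `N/2+1 ≤ i ≤ N` of
`Θ_i = min{h_i/ε, 1}·ψ(1 − t_i)` is bounded by
`2·max{σ/α, 1}·N⁻¹·sup_{t ∈ [0,1/2]} |ψ'(t)|`. -/
theorem theta_max_bound
    (α σ ε : ℝ) (hα : 0 < α) (hσ : 0 < σ) (hε : 0 < ε)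
    (N : ℕ) (hN4 : 4 ≤ N) (hNeven : Even N)
    (φ φ' : ℝ → ℝ)
    (hφderiv : ∀ t ∈ Set.Icc (0:ℝ) (1/2), HasDerivAt φ (φ' t) t)
    (hφ'cont : ContinuousOn φ' (Set.Icc (0:ℝ) (1/2)))
    (hφ0 : φ 0 = 0)
    (hφ'pos : ∀ t ∈ Set.Icc (0:ℝ) (1/2), 0 < φ' t)
    (ψ : ℝ → ℝ) (hψ : ∀ t, ψ t = Real.exp (-φ t)) :
    ∀ i : ℕ, N / 2 + 1 ≤ i → i ≤ N →
      min ((σ * ε / α) * (φ (1 - ((i:ℝ) - 1) / N) - φ (1 - (i:ℝ) / N)) / ε) 1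
          * ψ (1 - (i:ℝ) / N)
        ≤ 2 * max (σ / α) 1 * (1 / N)
            * sSup ((fun t => |deriv ψ t|) '' Set.Icc (0:ℝ) (1/2)) :=
  theta_max_bound_general α σ ε hε N hNeven φ φ' hφderiv hφ'cont hφ'pos ψ hψ
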